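/- Let r, s be real with 0 < s, 2s < r, and r + 5s/3 < 1. Then the map F has a fixed point in the interior of the triangle T: there exists (x₁, x₂) with 0 < x₁ < x₂ < 1 and F(x₁, x₂) = (x₁, x₂). Such a fixed point corresponds to a 3-cyclic periodic solution of the cell-cycle flow, in which the three clusters exchange positions after one third of the period. -/

import Mathlib

/-! On each affine piece of `Fmap` the fixed point of the affine map can be solved for
explicitly. Which piece contains its own fixed point depends on where `9 * r` lies relative to
`3 - 2 * s`, `3 + 8 * s`, `6 - 2 * s` and `6 + 9 * s`; these five regimes cover every admissible
`r`, and in each one the explicit point lies in the open triangle. -/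

/-- The piecewise-affine return-time map of the 3-cluster cell-cycle model,
defined branch by branch on the triangle `0 ≤ x₁ ≤ x₂ ≤ 1`
(the final `else` branch is never reached on the triangle). -/
noncomputable def Fmap (r s : ℝ) (p : ℝ × ℝ) : ℝ × ℝ :=
  if p.2 < r - s then
    (1 - p.2, 1 - p.2 + p.1)
  else if p.1 ≤ s ∧ r - s ≤ p.2 ∧ p.2 < r - s + p.1 then
    (1 - 4*p.2/3 + (r - s)/3, 1 - 4*p.2/3 + p.1 + (r - s)/3)
  else if p.1 ≤ s ∧ r - s + p.1 ≤ p.2 ∧ p.2 < r then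
    (1 - (5*p.2 - p.1)/3 + 2*(r - s)/3, 1 - (5*p.2 - 4*p.1)/3 + 2*(r - s)/3)
  else if p.1 ≤ s ∧ r ≤ p.2 ∧ p.2 < 1 - 5*s/3 + p.1/3 then
    (1 - p.2 + p.1/3 - 2*s/3, 1 - p.2 + 4*p.1/3 - 2*s/3)
  else if p.1 ≤ s ∧ 1 - 5*s/3 + p.1/3 ≤ p.2 ∧ p.2 < 1 - 5*(s - p.1)/3 then
    (3*(1 - p.2)/4 + (p.1 - s)/4, 3*(1 - p.2)/4 + (5*p.1 - s)/4)
  else if p.1 ≤ s ∧ 1 - 5*(s - p.1)/3 ≤ p.2 ∧ p.2 ≤ 1 then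
    (3*(1 - p.2)/5, p.1 + 3*(1 - p.2)/5)
  else if s < p.1 ∧ p.1 ≤ r - s ∧ r - s ≤ p.2 ∧ p.2 < r then
    (1 - 4*p.2/3 + (r - s)/3, 1 - 4*p.2/3 + p.1 + (r - s)/3)
  else if s < p.1 ∧ p.1 ≤ r - s ∧ r ≤ p.2 ∧ p.2 < 1 - 4*s/3 then
    (1 - p.2 - s/3, 1 - p.2 + p.1 - s/3)
  else if s < p.1 ∧ p.1 ≤ r - 3*(1 - p.2)/4 ∧ 1 - 4*s/3 ≤ p.2 ∧ p.2 ≤ 1 then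
    (3*(1 - p.2)/4, p.1 + 3*(1 - p.2)/4)
  else if r - s < p.1 ∧ r - s ≤ p.2 ∧ p.2 < r then
    (1 - 4*p.2/3 + (r - s)/3, 1 - 4*(p.2 - p.1)/3)
  else if r - s < p.1 ∧ p.1 ≤ r ∧ r ≤ p.2 ∧ p.2 ≤ 1 - 4*s/3 then
    (1 - p.2 - s/3, 1 - p.2 + 4*p.1/3 - r/3)
  else if r - 3*(1 - p.2)/4 < p.1 ∧ p.1 ≤ r ∧ 1 - 4*s/3 ≤ p.2 ∧ p.2 ≤ 1 then
    (3*(1 - p.2)/4, 1 - p.2 + 4*p.1/3 - r/3)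
  else if r < p.1 ∧ r ≤ p.2 ∧ p.2 ≤ 1 - 4*s/3 then
    (1 - p.2 - s/3, 1 - p.2 + p.1)
  else if r < p.1 ∧ 1 - 4*s/3 < p.2 ∧ p.2 ≤ 1 then
    (3*(1 - p.2)/4, 1 - p.2 + p.1)
  else p

/-- The triangle `0 ≤ x₁ ≤ x₂ ≤ 1`. -/
def Triangle : Set (ℝ × ℝ) := {p | 0 ≤ p.1 ∧ p.1 ≤ p.2 ∧ p.2 ≤ 1}

section Pieces

variable {r s a b : ℝ}

theorem Fmap_of_snd_lt_sub (hb : b < r - s) : Fmap r s (a, b) = (1 - b, 1 - b + a) := by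
  dsimp only [Fmap]
  rw [if_pos hb]

theorem Fmap_of_fst_le_sub_of_snd_lt (ha₁ : s < a) (ha₂ : a ≤ r - s) (hb₁ : r - s ≤ b)
    (hb₂ : b < r) :
    Fmap r s (a, b) = (1 - 4 * b / 3 + (r - s) / 3, 1 - 4 * b / 3 + a + (r - s) / 3) := by
  dsimp only [Fmap]
  rw [if_neg, if_neg, if_neg, if_neg, if_neg, if_neg, if_pos]
  all_goals first
    | (intro h; casesm* _ ∧ _; linarith)
    | (constructorm* _ ∧ _ <;> linarith)
    | (intro h; linarith)

theorem Fmap_of_fst_le_sub_of_le_snd (hs : 0 < s) (ha₁ : s < a) (ha₂ : a ≤ r - s) (hb₁ : r ≤ b)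
    (hb₂ : b < 1 - 4 * s / 3) :
    Fmap r s (a, b) = (1 - b - s / 3, 1 - b + a - s / 3) := by
  dsimp only [Fmap]
  rw [if_neg, if_neg, if_neg, if_neg, if_neg, if_neg, if_neg, if_pos]
  all_goals first
    | (intro h; casesm* _ ∧ _; linarith)
    | (constructorm* _ ∧ _ <;> linarith)
    | (intro h; linarith)

theorem Fmap_of_sub_lt_fst_le (hs : 0 < s) (hrs : 2 * s < r) (ha₁ : r - s < a) (ha₂ : a ≤ r)
    (hb₁ : r ≤ b) (hb₂ : b ≤ 1 - 4 * s / 3) :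
    Fmap r s (a, b) = (1 - b - s / 3, 1 - b + 4 * a / 3 - r / 3) := by
  dsimp only [Fmap]
  rw [if_neg, if_neg, if_neg, if_neg, if_neg, if_neg, if_neg, if_neg, if_neg, if_neg, if_pos]
  all_goals first
    | (intro h; casesm* _ ∧ _; linarith)
    | (constructorm* _ ∧ _ <;> linarith)
    | (intro h; linarith)

theorem Fmap_of_lt_fst (hs : 0 < s) (hrs : 2 * s < r) (ha : r < a) (hb₁ : r ≤ b)
    (hb₂ : b ≤ 1 - 4 * s / 3) :
    Fmap r s (a, b) = (1 - b - s / 3, 1 - b + a) := by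
  dsimp only [Fmap]
  rw [if_neg, if_neg, if_neg, if_neg, if_neg, if_neg, if_neg, if_neg, if_neg, if_neg, if_neg,
    if_neg, if_pos]
  all_goals first
    | (intro h; casesm* _ ∧ _; linarith)
    | (constructorm* _ ∧ _ <;> linarith)
    | (intro h; linarith)

end Pieces

open Function

def IsInteriorFixedPt (r s : ℝ) (p : ℝ × ℝ) : Prop :=
  0 < p.1 ∧ p.1 < p.2 ∧ p.2 < 1 ∧ IsFixedPt (Fmap r s) p

section FixedPoints

variable {r s : ℝ}

theorem isInteriorFixedPt_of_nine_mul_lt (hs : 0 < s) (hrs : 2 * s < r)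
    (hr : 9 * r < 3 - 2 * s) :
    IsInteriorFixedPt r s ((3 - 2 * s) / 9, (6 - s) / 9) := by
  refine ⟨by linarith, by linarith, by linarith, ?_⟩
  rw [IsFixedPt, Fmap_of_lt_fst hs hrs (by linarith) (by linarith) (by linarith)]
  ext <;> ring

theorem isInteriorFixedPt_of_nine_mul_mem_Ico (hs : 0 < s) (hrs : 2 * s < r)
    (hr₁ : 3 - 2 * s ≤ 9 * r) (hr₂ : 9 * r < 3 + 8 * s) :
    IsInteriorFixedPt r s ((3 + r - 2 * s) / 10, (21 - 3 * r - 4 * s) / 30) := by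
  refine ⟨by linarith, by linarith, by linarith, ?_⟩
  rw [IsFixedPt, Fmap_of_sub_lt_fst_le hs hrs (by linarith) (by linarith) (by linarith)
    (by linarith)]
  ext <;> ring

theorem isInteriorFixedPt_of_nine_mul_mem_Icc (hs : 0 < s) (h1 : r + 5 * s / 3 < 1)
    (hr₁ : 3 + 8 * s ≤ 9 * r) (hr₂ : 9 * r ≤ 6 - 2 * s) :
    IsInteriorFixedPt r s ((3 - s) / 9, 2 * (3 - s) / 9) := by
  refine ⟨by linarith, by linarith, by linarith, ?_⟩
  rw [IsFixedPt, Fmap_of_fst_le_sub_of_le_snd hs (by linarith) (by linarith) (by linarith)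
    (by linarith)]
  ext <;> ring

theorem isInteriorFixedPt_of_nine_mul_mem_Ioc (hs : 0 < s) (h1 : r + 5 * s / 3 < 1)
    (hr₁ : 6 - 2 * s < 9 * r) (hr₂ : 9 * r ≤ 6 + 9 * s) :
    IsInteriorFixedPt r s ((3 + r - s) / 11, 2 * (3 + r - s) / 11) := by
  refine ⟨by linarith, by linarith, by linarith, ?_⟩
  rw [IsFixedPt, Fmap_of_fst_le_sub_of_snd_lt (by linarith) (by linarith) (by linarith)
    (by linarith)]
  ext <;> ring

theorem isInteriorFixedPt_of_lt_nine_mul (hr : 6 + 9 * s < 9 * r) :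
    IsInteriorFixedPt r s (1 / 3, 2 / 3) := by
  refine ⟨by norm_num, by norm_num, by norm_num, ?_⟩
  rw [IsFixedPt, Fmap_of_snd_lt_sub (by linarith)]
  ext <;> ring

end FixedPoints

theorem Fmap_interior_fixed_point (r s : ℝ)
    (hs : 0 < s) (hrs : 2*s < r) (h1 : r + 5*s/3 < 1) :
    ∃ p : ℝ × ℝ, 0 < p.1 ∧ p.1 < p.2 ∧ p.2 < 1 ∧ Fmap r s p = p := by
  rcases lt_or_ge (9 * r) (3 - 2 * s) with hA | hA
  · exact ⟨_, isInteriorFixedPt_of_nine_mul_lt hs hrs hA⟩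
  rcases lt_or_ge (9 * r) (3 + 8 * s) with hB | hB
  · exact ⟨_, isInteriorFixedPt_of_nine_mul_mem_Ico hs hrs hA hB⟩
  rcases le_or_gt (9 * r) (6 - 2 * s) with hC | hC
  · exact ⟨_, isInteriorFixedPt_of_nine_mul_mem_Icc hs h1 hB hC⟩
  rcases le_or_gt (9 * r) (6 + 9 * s) with hD | hD
  · exact ⟨_, isInteriorFixedPt_of_nine_mul_mem_Ioc hs h1 hC hD⟩
  · exact ⟨_, isInteriorFixedPt_of_lt_nine_mul hD⟩
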